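/- arXiv:1911.12127 — 2 statements merged into one kernel-verified Lean document; each statement's English description precedes it below -/
import Mathlib

section
/- Let X be a set with a set of arrows Arr ⊆ X × X avoiding the diagonal. For subsets a, b ⊆ X define da := { (x,y) ∈ Arr : (x ∈ a and y ∉ a) or (x ∉ a and y ∈ a) } (arrows crossing the boundary of a). Then for all a, b ⊆ X, d(a ∩ b) equals the symmetric difference of { arrows in da with tip in b } and { arrows in db with tail in a }, i.e., d(a ∩ b) = (da ∩ᵣ b) ⊕ (a ∩ₗ db), where for ω ⊆ Arr, a ∩ₗ ω := { arrows in ω with tail in a } and ω ∩ᵣ b := { arrows in ω with tip in b }. -/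
open Set

/-- The exterior derivative of a subset `a` with respect to a graph `Arr` on `X`:
the set of arrows with exactly one end in `a`. -/
def dSet {X : Type*} (Arr : Set (X × X)) (a : Set X) : Set (X × X) :=
  {p ∈ Arr | Xor' (p.1 ∈ a) (p.2 ∈ a)}

/-- Leibniz rule for the boundary derivative on Venn diagrams:
`d(a ∩ b) = (da ∩ᵣ b) ⊕ (a ∩ₗ db)`, where `∩ᵣ` restricts to arrows with tip in
the subset, `∩ₗ` to arrows with tail in the subset, and `⊕` is symmetric
difference. -/
theorem dSet_inter {X : Type*} (Arr : Set (X × X))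
    (hArr : ∀ p ∈ Arr, p.1 ≠ p.2) (a b : Set X) :
    dSet Arr (a ∩ b) =
      symmDiff {p ∈ dSet Arr a | p.2 ∈ b} {p ∈ dSet Arr b | p.1 ∈ a} := by
  ext p
  simp only [dSet, Set.mem_setOf_eq, Set.symmDiff_def, Set.mem_union, Set.mem_diff,
    Set.mem_inter_iff, Xor', xor_def]
  by_cases h : p ∈ Arr <;> simp [h] <;> tauto
end

section
/- Let A = F₂({0,1}) and Ω¹ as in the 0–1 graph calculus, with bimodule connections on Ω¹ determined by σ(010) = a·010, σ(101) = b·101 for a, b ∈ F₂ via ∇ω = θ⊗ω + σ(ω⊗θ) with θ = 01+10. Then the metric compatibility condition ∇g = 0 for g = 010+101 holds if and only if a = b = 1, i.e., σ = id; thus the metric-compatible bimodule connection is unique. -/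
/- The 0–1 graph over F₂: bimodule connections are determined by
`σ(010) = a·010`, `σ(101) = b·101` via `∇ω = θ⊗ω + σ(ω⊗θ)` with `θ = 01+10`.
Bases: Ω¹ = {01,10}, 2-tensors {010,101}, 3-tensors {0101,1010};
elements are recorded by coordinates. -/

abbrev Omega1 := ZMod 2 × ZMod 2  -- coordinates (c₀₁, c₁₀)
abbrev Omega2 := ZMod 2 × ZMod 2  -- coordinates (c₀₁₀, c₁₀₁)
abbrev Omega3 := ZMod 2 × ZMod 2  -- coordinates (c₀₁₀₁, c₁₀₁₀)

/-- The unique metric `g = 010 + 101`. -/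
def gMet : Omega2 := (1, 1)

/-- The general bimodule map `σ`, diagonal on the basis `{010, 101}`. -/
def sigma (a b : ZMod 2) : Omega2 → Omega2 := fun c => (a * c.1, b * c.2)

/-- `∇ω = θ⊗ω + σ(ω⊗θ)`: for `ω = x·01 + y·10`,
`θ⊗ω = y·010 + x·101` and `ω⊗θ = x·010 + y·101`. -/
def nabla (a b : ZMod 2) : Omega1 → Omega2 :=
  fun ω => ((ω.2, ω.1) : Omega2) + sigma a b (ω.1, ω.2)

/-- Tensoring on the right by `10`: `010⊗10 = 0`, `101⊗10 = 1010`. -/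
def tensorR10 : Omega2 → Omega3 := fun c => (0, c.2)
/-- Tensoring on the right by `01`: `010⊗01 = 0101`, `101⊗01 = 0`. -/
def tensorR01 : Omega2 → Omega3 := fun c => (c.1, 0)
/-- Tensoring on the left by `01`: `01⊗010 = 0`, `01⊗101 = 0101`. -/
def tensorL01 : Omega2 → Omega3 := fun c => (c.2, 0)
/-- Tensoring on the left by `10`: `10⊗010 = 1010`, `10⊗101 = 0`. -/
def tensorL10 : Omega2 → Omega3 := fun c => (0, c.1)
/-- `σ ⊗ id` on 3-tensors (acting on the first two steps). -/
def sigmaTensorId (a b : ZMod 2) : Omega3 → Omega3 := fun c => (a * c.1, b * c.2)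

/-- `∇g = ∇(01)⊗10 + ∇(10)⊗01 + (σ⊗id)(01⊗∇(10) + 10⊗∇(01))`. -/
def nablaG (a b : ZMod 2) : Omega3 :=
  tensorR10 (nabla a b (1, 0)) + tensorR01 (nabla a b (0, 1)) +
    sigmaTensorId a b (tensorL01 (nabla a b (0, 1)) + tensorL10 (nabla a b (1, 0)))

/-!
Both coefficients of `∇g` equal `1 + ab`: the untwisted terms `∇(01)⊗10 + ∇(10)⊗01` give `g`'s
coefficients `1`, while the `σ`-twisted term picks up one factor of `a` and one of `b`. Over `F₂`,
`1 + ab = 0` means `ab = 1`, and since `1` is the only unit of `F₂` this forces `a = b = 1`.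
-/

theorem nabla_zeroOne (a b : ZMod 2) : nabla a b (1, 0) = (a, 1) := by
  simp [nabla, sigma]

theorem nabla_oneZero (a b : ZMod 2) : nabla a b (0, 1) = (1, b) := by
  simp [nabla, sigma]

theorem nablaG_eq (a b : ZMod 2) : nablaG a b = (1 + a * b, 1 + a * b) := by
  simp [nablaG, nabla_zeroOne, nabla_oneZero, tensorR10, tensorR01, tensorL01, tensorL10,
    sigmaTensorId, mul_comm]

/-- Metric compatibility `∇g = 0` holds iff `a = b = 1`, i.e. `σ = id`:
the metric-compatible bimodule connection on the 0–1 graph is unique. -/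
theorem two_point_unique_metric_connection (a b : ZMod 2) :
    nablaG a b = 0 ↔ a = 1 ∧ b = 1 := by
  rw [nablaG_eq, Prod.mk_eq_zero, and_self, CharTwo.add_eq_zero, eq_comm, mul_eq_one]
end
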